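/- In a finite extensive-form game, a totally mixed strategy profile σ satisfies all indifference equations u_j(s_j, σ_{−j}) = u_j(t_j, σ_{−j}) (for every player j and all pure strategies s_j, t_j of j) if and only if the induced profile on every subgame satisfies the corresponding indifference equations for that subgame. -/

import Mathlib

/-- A finite extensive-form game tree: leaves carry payoff vectors, chance
nodes carry edge weights, player nodes carry the acting player's label. -/
inductive GameTree (N : ℕ) : Type
  | leaf (payoff : Fin N → ℝ)
  | chance (n : ℕ) (wt : Fin n → ℝ) (children : Fin n → GameTree N)
  | node (player : Fin N) (n : ℕ) (children : Fin n → GameTree N)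

namespace GameTree

variable {N : ℕ}

/-- A behavioral strategy profile: at each node address, a probability for
each child index. -/
abbrev Profile := List ℕ → ℕ → ℝ

/-- Chance weights are positive and sum to 1; all branching is nonempty. -/
def ValidWeights : GameTree N → Prop
  | leaf _ => True
  | chance n wt cs => 0 < n ∧ (∀ k, 0 < wt k) ∧ (∑ k, wt k) = 1 ∧ ∀ k, (cs k).ValidWeights
  | node _ n cs => 0 < n ∧ ∀ k, (cs k).ValidWeights

/-- The subtree at a given address (list of child indices), if any. -/
def nodeAt : GameTree N → List ℕ → Option (GameTree N)
  | t, [] => some t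
  | leaf _, _ :: _ => none
  | chance n _ cs, k :: r => if h : k < n then (cs ⟨k, h⟩).nodeAt r else none
  | node _ n cs, k :: r => if h : k < n then (cs ⟨k, h⟩).nodeAt r else none

/-- The player acting at a given address, if any. -/
def actor (t : GameTree N) (p : List ℕ) : Option (Fin N) :=
  match t.nodeAt p with
  | some (node i _ _) => some i
  | _ => none

/-- Probability, under profile `σ`, of the path descending from the current
subtree along the given child indices; `p` is the address of the current
subtree in the whole tree. -/
noncomputable def pathProb (σ : Profile) : GameTree N → List ℕ → List ℕ → ℝ
  | _, _, [] => 1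
  | leaf _, _, _ :: _ => 0
  | chance n wt cs, p, k :: r =>
      if h : k < n then wt ⟨k, h⟩ * pathProb σ (cs ⟨k, h⟩) (p ++ [k]) r else 0
  | node _ n cs, p, k :: r =>
      if h : k < n then σ p k * pathProb σ (cs ⟨k, h⟩) (p ++ [k]) r else 0

/-- The list of addresses of all leaves of the tree. -/
def leaves : GameTree N → List (List ℕ)
  | leaf _ => [[]]
  | chance n _ cs => (List.finRange n).flatMap fun k => ((cs k).leaves).map (k.val :: ·)
  | node _ n cs => (List.finRange n).flatMap fun k => ((cs k).leaves).map (k.val :: ·)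

/-- Payoff to player `i` at the leaf with the given address (0 if invalid). -/
noncomputable def payoffAt : GameTree N → List ℕ → Fin N → ℝ
  | leaf u, [], i => u i
  | chance n _ cs, k :: r, i => if h : k < n then (cs ⟨k, h⟩).payoffAt r i else 0
  | node _ n cs, k :: r, i => if h : k < n then (cs ⟨k, h⟩).payoffAt r i else 0
  | _, _, _ => 0

/-- Expected utility of player `i` under profile `σ`:
`u_i(σ) = Σ_λ u_i(λ) Pr[λ|σ]`. -/
noncomputable def util (σ : Profile) (t : GameTree N) (i : Fin N) : ℝ :=
  (t.leaves.map fun l => t.payoffAt l i * pathProb σ t [] l).sum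

/-- The profile induced on the subgame rooted at address `ν`. -/
def induced (σ : Profile) (ν : List ℕ) : Profile := fun p => σ (ν ++ p)

/-- The behavioral profile corresponding to a pure strategy profile. -/
def pureProfile (s : List ℕ → ℕ) : Profile := fun p k => if s p = k then 1 else 0

/-- A pure strategy profile selects an actual outgoing edge at each player node. -/
def ValidPure (t : GameTree N) (s : List ℕ → ℕ) : Prop :=
  ∀ p i m cs, t.nodeAt p = some (node i m cs) → s p < m

/-- A behavioral profile is a genuine probability assignment at each player node. -/
def ValidProfile (t : GameTree N) (σ : Profile) : Prop :=
  ∀ p i m cs, t.nodeAt p = some (node i m cs) →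
    (∀ k < m, 0 ≤ σ p k) ∧ (∑ k ∈ Finset.range m, σ p k) = 1

/-- A totally mixed behavioral profile: every edge at every player node gets
strictly positive probability. -/
def TotallyMixed (t : GameTree N) (σ : Profile) : Prop :=
  ∀ p i m cs, t.nodeAt p = some (node i m cs) →
    (∀ k < m, 0 < σ p k) ∧ (∑ k ∈ Finset.range m, σ p k) = 1

/-- The profile where player `j` deviates from `σ` to the pure strategy `s`. -/
def dev (t : GameTree N) (σ : Profile) (j : Fin N) (s : List ℕ → ℕ) : Profile :=
  fun p k => if t.actor p = some j then pureProfile s p k else σ p k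

/-- Nash equilibrium: no player can improve by a unilateral pure deviation. -/
def IsNash (t : GameTree N) (σ : Profile) : Prop :=
  ∀ j : Fin N, ∀ s : List ℕ → ℕ, ValidPure t s → util (dev t σ j s) t j ≤ util σ t j

/-- Subgame perfection: the induced profile is a Nash equilibrium of every subgame. -/
def IsSubgamePerfect (t : GameTree N) (σ : Profile) : Prop :=
  ∀ ν t', t.nodeAt ν = some t' → IsNash t' (induced σ ν)

/-- Every player is indifferent among all of their pure strategies. -/
def Indifferent (t : GameTree N) (σ : Profile) : Prop :=
  ∀ j : Fin N, ∀ s₁ s₂ : List ℕ → ℕ, ValidPure t s₁ → ValidPure t s₂ →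
    util (dev t σ j s₁) t j = util (dev t σ j s₂) t j

/-- Player `j` is indifferent among all of `j`'s pure strategies. -/
def IndifferentFor (t : GameTree N) (σ : Profile) (j : Fin N) : Prop :=
  ∀ s₁ s₂ : List ℕ → ℕ, ValidPure t s₁ → ValidPure t s₂ →
    util (dev t σ j s₁) t j = util (dev t σ j s₂) t j

end GameTree

/-! If two profiles differ only inside the subgame at `ν`, their utilities differ by the
probability of reaching `ν` times the difference of the subgame utilities. Extending two pure
strategies of the subgame by a common strategy that steers play towards `ν` therefore turns a
subgame indifference equation into a global one scaled by that reach probability, which is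
positive because `σ` is totally mixed and chance weights are positive. The converse is the
subgame at the root. -/

namespace GameTree

variable {N : ℕ}

theorem nodeAt_append {t t' : GameTree N} {p : List ℕ} (q : List ℕ)
    (h : t.nodeAt p = some t') : t.nodeAt (p ++ q) = t'.nodeAt q := by
  induction p generalizing t with
  | nil => simp only [GameTree.nodeAt, Option.some.injEq] at h; subst h; rfl
  | cons k r ih =>
    cases t with
    | leaf => simp [GameTree.nodeAt] at h
    | chance n _ cs | node _ n cs =>
      obtain ⟨hk, h⟩ : ∃ hk : k < n, (cs ⟨k, hk⟩).nodeAt r = some t' := by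
        simpa [GameTree.nodeAt] using h
      simpa [GameTree.nodeAt, hk] using ih h

theorem ValidWeights.nodeAt {t t' : GameTree N} {p : List ℕ} (hw : t.ValidWeights)
    (h : t.nodeAt p = some t') : t'.ValidWeights := by
  induction p generalizing t with
  | nil => simp only [GameTree.nodeAt, Option.some.injEq] at h; subst h; exact hw
  | cons k r ih =>
    cases t with
    | leaf => simp [GameTree.nodeAt] at h
    | chance n _ cs =>
      obtain ⟨hk, h⟩ : ∃ hk : k < n, (cs ⟨k, hk⟩).nodeAt r = some t' := by
        simpa [GameTree.nodeAt] using h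
      exact ih (hw.2.2.2 _) h
    | node _ n cs =>
      obtain ⟨hk, h⟩ : ∃ hk : k < n, (cs ⟨k, hk⟩).nodeAt r = some t' := by
        simpa [GameTree.nodeAt] using h
      exact ih (hw.2 _) h

theorem actor_append {t t' : GameTree N} {ν : List ℕ} (hν : t.nodeAt ν = some t')
    (p : List ℕ) : t.actor (ν ++ p) = t'.actor p := by
  rw [actor, actor, nodeAt_append p hν]

theorem lt_of_nodeAt_append_cons {t t' : GameTree N} {p rest : List ℕ} {k : ℕ} {i : Fin N}
    {m : ℕ} {cs : Fin m → GameTree N} (h : t.nodeAt (p ++ k :: rest) = some t')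
    (hp : t.nodeAt p = some (node i m cs)) : k < m := by
  rw [nodeAt_append _ hp] at h
  simp only [GameTree.nodeAt] at h
  split_ifs at h with hk
  exact hk

@[simp]
theorem induced_nil (σ : Profile) : induced σ [] = σ := rfl

theorem induced_induced (σ : Profile) (p q : List ℕ) :
    induced (induced σ p) q = induced σ (p ++ q) := by
  funext r
  simp [induced]

theorem pathProb_induced (σ : Profile) (p : List ℕ) (t : GameTree N) (q l : List ℕ) :
    pathProb (induced σ p) t q l = pathProb σ t (p ++ q) l := by
  induction l generalizing t q with
  | nil => simp [pathProb]
  | cons k r ih => cases t <;> simp [pathProb, induced, ih]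

theorem util_chance (σ : Profile) (n : ℕ) (wt : Fin n → ℝ) (cs : Fin n → GameTree N)
    (i : Fin N) :
    util σ (chance n wt cs) i = ∑ k : Fin n, wt k * util (induced σ [k]) (cs k) i := by
  simp only [util, leaves, List.flatMap_def, List.map_flatten, List.sum_flatten,
    List.map_map, Fin.sum_univ_def]
  congr 1
  refine List.map_congr_left fun k _ => ?_
  rw [Function.comp_apply, Function.comp_apply, List.map_map, ← List.sum_map_mul_left]
  congr 1
  refine List.map_congr_left fun l _ => ?_
  simp [payoffAt, pathProb, pathProb_induced]
  ring

theorem util_node (σ : Profile) (j : Fin N) (n : ℕ) (cs : Fin n → GameTree N) (i : Fin N) :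
    util σ (node j n cs) i = ∑ k : Fin n, σ [] k * util (induced σ [k]) (cs k) i := by
  simp only [util, leaves, List.flatMap_def, List.map_flatten, List.sum_flatten,
    List.map_map, Fin.sum_univ_def]
  congr 1
  refine List.map_congr_left fun k _ => ?_
  rw [Function.comp_apply, Function.comp_apply, List.map_map, ← List.sum_map_mul_left]
  congr 1
  refine List.map_congr_left fun l _ => ?_
  simp [payoffAt, pathProb, pathProb_induced]
  ring

theorem _root_.Finset.sum_mul_sub_sum_mul_eq_of_forall_ne {ι R : Type*} [Fintype ι] [CommRing R]
    (w f g : ι → R) (k : ι) (h : ∀ m ≠ k, f m = g m) :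
    ∑ m, w m * f m - ∑ m, w m * g m = w k * (f k - g k) := by
  rw [← Finset.sum_sub_distrib, Finset.sum_eq_single k
    (fun m _ hm => by rw [h m hm, sub_self]) (by simp), mul_sub]

theorem util_sub_util_eq_pathProb_mul {σ₁ σ₂ : Profile} {t t' : GameTree N} {ν : List ℕ}
    (hν : t.nodeAt ν = some t') (hσ : ∀ p, ¬ ν <+: p → σ₁ p = σ₂ p) (i : Fin N) :
    util σ₁ t i - util σ₂ t i =
      pathProb σ₁ t [] ν * (util (induced σ₁ ν) t' i - util (induced σ₂ ν) t' i) := by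
  induction ν generalizing t σ₁ σ₂ with
  | nil =>
    simp only [GameTree.nodeAt, Option.some.injEq] at hν
    simp [hν, pathProb]
  | cons k ρ ih =>
    have hchild : ∀ m : ℕ, m ≠ k → induced σ₁ [m] = induced σ₂ [m] := fun m hm =>
      funext fun p => hσ (m :: p) (by simp [hm.symm])
    have hσk : ∀ p, ¬ ρ <+: p → induced σ₁ [k] p = induced σ₂ [k] p := fun p hp =>
      hσ (k :: p) (by simpa using hp)
    cases t with
    | leaf => simp [GameTree.nodeAt] at hν
    | chance n wt cs =>
      obtain ⟨hk, hν⟩ : ∃ hk : k < n, (cs ⟨k, hk⟩).nodeAt ρ = some t' := by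
        simpa [GameTree.nodeAt] using hν
      rw [util_chance, util_chance, Finset.sum_mul_sub_sum_mul_eq_of_forall_ne _ _ _ ⟨k, hk⟩
        (fun m hm => by rw [hchild m (fun h => hm (Fin.ext h))]), ih hν hσk]
      simp [pathProb, hk, pathProb_induced, induced_induced, mul_assoc]
    | node j n cs =>
      obtain ⟨hk, hν⟩ : ∃ hk : k < n, (cs ⟨k, hk⟩).nodeAt ρ = some t' := by
        simpa [GameTree.nodeAt] using hν
      have hroot : σ₁ [] = σ₂ [] := hσ [] (by simp)
      rw [util_node, util_node, hroot, Finset.sum_mul_sub_sum_mul_eq_of_forall_ne _ _ _ ⟨k, hk⟩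
        (fun m hm => by rw [hchild m (fun h => hm (Fin.ext h))]), ih hν hσk]
      simp [pathProb, hk, pathProb_induced, induced_induced, hroot, mul_assoc]

theorem pathProb_pos {σ : Profile} {t t' : GameTree N} {ν : List ℕ} (hw : t.ValidWeights)
    (hν : t.nodeAt ν = some t')
    (hσ : ∀ p k rest i m cs, p ++ k :: rest = ν → t.nodeAt p = some (node i m cs) → 0 < σ p k) :
    0 < pathProb σ t [] ν := by
  induction ν generalizing t σ with
  | nil => simp [pathProb]
  | cons k ρ ih =>
    cases t with
    | leaf => simp [GameTree.nodeAt] at hν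
    | chance n wt cs =>
      obtain ⟨hk, hν⟩ : ∃ hk : k < n, (cs ⟨k, hk⟩).nodeAt ρ = some t' := by
        simpa [GameTree.nodeAt] using hν
      have hnext := ih (σ := induced σ [k]) (hw.2.2.2 _) hν fun p k' rest i m cs hp hnode =>
        hσ (k :: p) k' rest i m cs (by simp [hp]) (by simpa [GameTree.nodeAt, hk] using hnode)
      rw [pathProb_induced] at hnext
      simpa [pathProb, hk] using mul_pos (hw.2.1 _) hnext
    | node j n cs =>
      obtain ⟨hk, hν⟩ : ∃ hk : k < n, (cs ⟨k, hk⟩).nodeAt ρ = some t' := by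
        simpa [GameTree.nodeAt] using hν
      have hnext := ih (σ := induced σ [k]) (hw.2 _) hν fun p k' rest i m cs hp hnode =>
        hσ (k :: p) k' rest i m cs (by simp [hp]) (by simpa [GameTree.nodeAt, hk] using hnode)
      rw [pathProb_induced] at hnext
      simpa [pathProb, hk] using mul_pos (hσ [] k ρ j n cs rfl rfl) hnext

/-- Above `ν` the extension steers towards `ν`, so that the subgame is reached with positive
probability. -/
def extendPure (ν : List ℕ) (s : List ℕ → ℕ) (p : List ℕ) : ℕ :=
  if ν <+: p then s (p.drop ν.length) else if p <+: ν then ν.getD p.length 0 else 0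

theorem extendPure_append (ν : List ℕ) (s : List ℕ → ℕ) (q : List ℕ) :
    extendPure ν s (ν ++ q) = s q := by
  simp [extendPure]

theorem extendPure_eq_of_not_prefix {ν p : List ℕ} (s s' : List ℕ → ℕ) (h : ¬ ν <+: p) :
    extendPure ν s p = extendPure ν s' p := by
  simp [extendPure, h]

theorem extendPure_of_append_cons {ν p rest : List ℕ} {k : ℕ} (s : List ℕ → ℕ)
    (h : p ++ k :: rest = ν) : extendPure ν s p = k := by
  subst h
  have hnot : ¬ p ++ k :: rest <+: p := fun hp => by simpa using hp.length_le
  simp [extendPure, hnot]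

theorem validPure_extendPure {t t' : GameTree N} {ν : List ℕ} {s : List ℕ → ℕ}
    (hw : t.ValidWeights) (hν : t.nodeAt ν = some t') (hs : ValidPure t' s) :
    ValidPure t (extendPure ν s) := by
  intro p i m cs hp
  by_cases hbelow : ν <+: p
  · obtain ⟨q, rfl⟩ := hbelow
    rw [extendPure_append]
    exact hs q i m cs (by rwa [nodeAt_append q hν] at hp)
  by_cases habove : p <+: ν
  · obtain ⟨_ | ⟨k, rest⟩, hrest⟩ := habove
    · exact absurd (by simp [← hrest]) hbelow
    · rw [extendPure_of_append_cons s hrest]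
      exact lt_of_nodeAt_append_cons (hrest ▸ hν) hp
  · simp only [extendPure, hbelow, habove, if_false]
    exact (hw.nodeAt hp).1

theorem induced_dev_extendPure {t t' : GameTree N} {ν : List ℕ} (hν : t.nodeAt ν = some t')
    (σ : Profile) (j : Fin N) (s : List ℕ → ℕ) :
    induced (dev t σ j (extendPure ν s)) ν = dev t' (induced σ ν) j s := by
  funext p k
  simp [induced, dev, pureProfile, actor_append hν, extendPure_append]

theorem dev_extendPure_pos {t t' : GameTree N} {ν p rest : List ℕ} {k : ℕ} {σ : Profile}
    {i : Fin N} {m : ℕ} {cs : Fin m → GameTree N} (hm : TotallyMixed t σ)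
    (hν : t.nodeAt ν = some t') (hpν : p ++ k :: rest = ν)
    (hp : t.nodeAt p = some (node i m cs)) (j : Fin N) (s : List ℕ → ℕ) :
    0 < dev t σ j (extendPure ν s) p k := by
  have hactor : t.actor p = some i := by simp [actor, hp]
  by_cases hij : i = j
  · simp [dev, hactor, hij, pureProfile, extendPure_of_append_cons s hpν]
  · simpa [dev, hactor, hij] using (hm p i m cs hp).1 k (lt_of_nodeAt_append_cons (hpν ▸ hν) hp)

end GameTree

open GameTree in
/-- a totally mixed profile satisfies all indifference equations iff
the induced profile on every subgame satisfies the corresponding indifference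
equations for that subgame. -/
theorem indifferent_iff_subgames_indifferent {N : ℕ} (t : GameTree N)
    (hw : t.ValidWeights) (σ : GameTree.Profile) (hm : TotallyMixed t σ) :
    Indifferent t σ ↔
      ∀ ν t', t.nodeAt ν = some t' → Indifferent t' (induced σ ν) := by
  refine ⟨fun hind ν t' hν j s₁ s₂ hs₁ hs₂ => ?_, fun h => h [] t (by simp [GameTree.nodeAt])⟩
  have hdiff := util_sub_util_eq_pathProb_mul hν
    (σ₁ := dev t σ j (extendPure ν s₁)) (σ₂ := dev t σ j (extendPure ν s₂))
    (fun p hp => by funext k; simp only [dev, pureProfile, extendPure_eq_of_not_prefix s₁ s₂ hp]) j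
  have hreach : 0 < pathProb (dev t σ j (extendPure ν s₁)) t [] ν :=
    pathProb_pos hw hν fun p k rest i m cs hpν hp => dev_extendPure_pos hm hν hpν hp j s₁
  rw [hind j _ _ (validPure_extendPure hw hν hs₁) (validPure_extendPure hw hν hs₂), sub_self,
    eq_comm, mul_eq_zero, sub_eq_zero, induced_dev_extendPure hν,
    induced_dev_extendPure hν] at hdiff
  exact hdiff.resolve_left hreach.ne'
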